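/- Let f be any gamble on X. Then: (i) for every closed interval I ∈ I_f there is at least one path ω with I ∈ I_f(ω); (ii) for every path ω, the set I_f(ω) is nonempty, since [min f, max f] ∈ I_f(ω); (iii) for every path ω, if I ∈ I_f(ω) and I ⊆ I' with I' ∈ I_f, then also I' ∈ I_f(ω). -/

import Mathlib

open Filter

/-- A coherent lower expectation on a nonempty finite sample space `X`. -/
def IsCoherent {X : Type} [Fintype X] [Nonempty X] (E : (X → ℝ) → ℝ) : Prop :=
  (∀ f : X → ℝ, Finset.univ.inf' Finset.univ_nonempty f ≤ E f) ∧
  (∀ (f : X → ℝ) (α : ℝ), 0 ≤ α → E (fun x => α * f x) = α * E f) ∧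
  (∀ f g : X → ℝ, E f + E g ≤ E (fun x => f x + g x))

/-- The conjugate upper expectation. -/
noncomputable def upperE {X : Type} (E : (X → ℝ) → ℝ) (f : X → ℝ) : ℝ :=
  -E (fun x => -f x)

/-- The process difference `ΔF(s)(x) = F(sx) − F(s)`. -/
noncomputable def procDiff {X : Type} (F : List X → ℝ) (s : List X) : X → ℝ :=
  fun x => F (s ++ [x]) - F s

/-- `M` is a supermartingale for the forecasting system `Φ`. -/
def IsSupermartingale {X : Type} (Φ : List X → (X → ℝ) → ℝ) (M : List X → ℝ) : Prop :=
  ∀ s : List X, upperE (Φ s) (procDiff M s) ≤ 0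

/-- A real process is computable if some recursive net of rationals converges
effectively to it. -/
def ComputableProcess {X : Type} [Primcodable X] (F : List X → ℝ) : Prop :=
  ∃ r : List X × ℕ → ℚ, Computable r ∧
    ∀ (s : List X) (n N : ℕ), N ≤ n → |(r (s, n) : ℝ) - F s| ≤ (2 : ℝ) ^ (-(N : ℤ))

/-- The length-`n` prefix `ω^n` of a path `ω`. -/
def prefixOf {X : Type} (ω : ℕ → X) (n : ℕ) : List X := (List.range n).map ω

/-- A path `ω` is computably random for the forecasting system `Φ` if every
computable nonnegative supermartingale for `Φ` is bounded above along `ω`. -/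
def ComputablyRandom {X : Type} [Fintype X] [Nonempty X] [Primcodable X]
    (Φ : List X → (X → ℝ) → ℝ) (ω : ℕ → X) : Prop :=
  ∀ M : List X → ℝ, ComputableProcess M → (∀ s, 0 ≤ M s) →
    IsSupermartingale Φ M → BddAbove (Set.range fun n => M (prefixOf ω n))

/-- A computable real number. -/
def ComputableReal (x : ℝ) : Prop :=
  ∃ r : ℕ → ℚ, Computable r ∧ ∀ n : ℕ, |(r n : ℝ) - x| ≤ (2 : ℝ) ^ (-(n : ℤ))

/-- A path `ω` is computably random for a gamble `f` and the closed interval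
`[a, b]` if there is a coherent lower expectation `E` for which `ω` is
computably random (w.r.t. the stationary forecasting system), with `E(f) = a`
and `Ē(f) = b`.  In other words, `[a, b] ∈ I_f(ω)`. -/
def RandomInterval {X : Type} [Fintype X] [Nonempty X] [Primcodable X]
    (f : X → ℝ) (a b : ℝ) (ω : ℕ → X) : Prop :=
  ∃ E : (X → ℝ) → ℝ, IsCoherent E ∧ ComputablyRandom (fun _ : List X => E) ω ∧
    E f = a ∧ upperE E f = b

/-!
For an interval `[a, b] ⊆ [min f, max f]`, mixing the point masses at a minimiser and a
maximiser of `f` gives linear previsions with `f`-values `a` and `b`; their lower envelope `E`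
has `E f = a` and `Ē f = b`. Every forecasting system admits a computably random path: there
are only countably many computable processes `M₀, M₁, …`, and one chooses the path greedily so
that `∑_{k ≤ n} 2⁻ᵏ Mₖ(ωⁿ) / (1 + Mₖ(ωᵏ))` increases by at most `2⁻ⁿ` at step `n` (the `k`-th
process enters at time `k`, normalised by its value then). This bounds the sum by `2`, and hence
each `Mₖ` along `ω`. Under the vacuous model `min`, supermartingales never increase, so every
path is random for it. Finally, lowering a model to `min E G` only shrinks the set of
supermartingales, so randomness for `E` passes to it.
-/

open Finset

namespace IsCoherent

variable {X : Type} [Fintype X] [Nonempty X] {E F : (X → ℝ) → ℝ}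

lemma map_zero (hE : IsCoherent E) : E (fun _ => 0) = 0 := by
  simpa using hE.2.1 (fun _ => 0) 0 le_rfl

lemma le_upperE (hE : IsCoherent E) (g : X → ℝ) : E g ≤ upperE E g := by
  have h := hE.2.2 g (fun x => -g x)
  simp only [add_neg_cancel, hE.map_zero] at h
  rw [upperE]
  linarith

lemma exists_le_upperE (hE : IsCoherent E) (g : X → ℝ) : ∃ x, g x ≤ upperE E g := by
  obtain ⟨x, -, hx⟩ := exists_mem_eq_inf' univ_nonempty g
  exact ⟨x, hx ▸ (hE.1 g).trans (hE.le_upperE g)⟩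

lemma upperE_add_le (hE : IsCoherent E) (g h : X → ℝ) :
    upperE E (fun x => g x + h x) ≤ upperE E g + upperE E h := by
  have := hE.2.2 (fun x => -g x) (fun x => -h x)
  simp only [upperE, neg_add]
  linarith

lemma upperE_const_mul (hE : IsCoherent E) (g : X → ℝ) {c : ℝ} (hc : 0 ≤ c) :
    upperE E (fun x => c * g x) = c * upperE E g := by
  simp only [upperE, ← mul_neg, hE.2.1 _ c hc]

lemma upperE_sum_le (hE : IsCoherent E) {ι : Type*} (s : Finset ι) (w : ι → ℝ)
    (g : ι → X → ℝ) (hw : ∀ i ∈ s, 0 ≤ w i) :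
    upperE E (fun x => ∑ i ∈ s, w i * g i x) ≤ ∑ i ∈ s, w i * upperE E (g i) := by
  classical
  induction s using Finset.induction_on with
  | empty => simp [upperE, hE.map_zero]
  | insert a s ha ih =>
    simp only [sum_insert ha]
    calc upperE E (fun x => w a * g a x + ∑ i ∈ s, w i * g i x)
        ≤ upperE E (fun x => w a * g a x) + upperE E (fun x => ∑ i ∈ s, w i * g i x) :=
          hE.upperE_add_le _ _
      _ ≤ w a * upperE E (g a) + ∑ i ∈ s, w i * upperE E (g i) := by
          rw [hE.upperE_const_mul _ (hw a (mem_insert_self a s))]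
          exact add_le_add_right (ih fun i hi => hw i (mem_insert_of_mem hi)) _

protected lemma min (hE : IsCoherent E) (hF : IsCoherent F) :
    IsCoherent (fun g => min (E g) (F g)) := by
  refine ⟨fun g => le_min (hE.1 g) (hF.1 g), fun g α hα => ?_, fun g h => ?_⟩
  · simp only [hE.2.1 g α hα, hF.2.1 g α hα, mul_min_of_nonneg _ _ hα]
  · exact le_min
      ((add_le_add (min_le_left _ _) (min_le_left _ _)).trans (hE.2.2 g h))
      ((add_le_add (min_le_right _ _) (min_le_right _ _)).trans (hF.2.2 g h))

end IsCoherent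

lemma upperE_min {X : Type} (E F : (X → ℝ) → ℝ) (g : X → ℝ) :
    upperE (fun h => min (E h) (F h)) g = max (upperE E g) (upperE F g) := by
  simp only [upperE, ← max_neg_neg]

lemma upperE_le_upperE {X : Type} {E F : (X → ℝ) → ℝ} (hle : ∀ g, F g ≤ E g) (g : X → ℝ) :
    upperE E g ≤ upperE F g :=
  neg_le_neg (hle _)

section Models

variable {X : Type} [Fintype X] [Nonempty X]

lemma exists_isCoherent_lower_upper_eq_point {f : X → ℝ} {c : ℝ}
    (hc : univ.inf' univ_nonempty f ≤ c) (hc' : c ≤ univ.sup' univ_nonempty f) :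
    ∃ P : (X → ℝ) → ℝ, IsCoherent P ∧ P f = c ∧ upperE P f = c := by
  obtain ⟨x, -, hx⟩ := exists_mem_eq_inf' univ_nonempty f
  obtain ⟨y, -, hy⟩ := exists_mem_eq_sup' univ_nonempty f
  rw [hx] at hc
  rw [hy] at hc'
  obtain ⟨p, q, hp, hq, hpq, hc⟩ : c ∈ segment ℝ (f x) (f y) := by
    rw [segment_eq_Icc (hc.trans hc')]; exact ⟨hc, hc'⟩
  simp only [smul_eq_mul] at hc
  refine ⟨fun g => p * g x + q * g y, ⟨fun g => ?_, fun g α _ => by ring, fun g h => by linarith⟩,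
    hc, by simp only [upperE]; linarith⟩
  set m := univ.inf' univ_nonempty g
  calc m = p * m + q * m := by rw [← add_mul, hpq, one_mul]
    _ ≤ p * g x + q * g y := by gcongr <;> exact inf'_le _ (mem_univ _)

lemma exists_isCoherent_lower_upper_eq {f : X → ℝ} {a b : ℝ} (hab : a ≤ b)
    (ha : univ.inf' univ_nonempty f ≤ a) (hb : b ≤ univ.sup' univ_nonempty f) :
    ∃ E : (X → ℝ) → ℝ, IsCoherent E ∧ E f = a ∧ upperE E f = b := by
  obtain ⟨P, hP, hPf, hPf'⟩ := exists_isCoherent_lower_upper_eq_point ha (hab.trans hb)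
  obtain ⟨Q, hQ, hQf, hQf'⟩ := exists_isCoherent_lower_upper_eq_point (ha.trans hab) hb
  refine ⟨fun g => min (P g) (Q g), hP.min hQ, ?_, ?_⟩
  · simp only [hPf, hQf, min_eq_left hab]
  · rw [upperE_min, hPf', hQf', max_eq_right hab]

def vacuous (g : X → ℝ) : ℝ := univ.inf' univ_nonempty g

lemma isCoherent_vacuous : IsCoherent (vacuous (X := X)) := by
  refine ⟨fun g => le_rfl, fun g α hα => le_antisymm ?_ ?_, fun g h => ?_⟩
  · obtain ⟨x, -, hx⟩ := exists_mem_eq_inf' univ_nonempty g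
    exact (inf'_le _ (mem_univ x)).trans (by rw [vacuous, hx])
  · exact le_inf' _ _ fun x _ => mul_le_mul_of_nonneg_left (inf'_le _ (mem_univ x)) hα
  · exact le_inf' _ _ fun x _ => add_le_add (inf'_le _ (mem_univ x)) (inf'_le _ (mem_univ x))

lemma upperE_vacuous (f : X → ℝ) : upperE vacuous f = univ.sup' univ_nonempty f := by
  obtain ⟨x, -, hx⟩ := exists_mem_eq_sup' univ_nonempty f
  refine le_antisymm ?_ (hx ▸ le_neg.mp (inf'_le _ (mem_univ x)))
  exact neg_le.mp (le_inf' _ _ fun y _ => neg_le_neg (le_sup' f (mem_univ y)))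

end Models

section Paths

variable {X : Type}

lemma prefixOf_zero (ω : ℕ → X) : prefixOf ω 0 = [] := rfl

lemma prefixOf_succ (ω : ℕ → X) (n : ℕ) : prefixOf ω (n + 1) = prefixOf ω n ++ [ω n] := by
  simp [prefixOf, List.range_succ]

lemma length_prefixOf (ω : ℕ → X) (n : ℕ) : (prefixOf ω n).length = n := by
  simp [prefixOf]

lemma take_prefixOf (ω : ℕ → X) {k n : ℕ} (hkn : k ≤ n) :
    (prefixOf ω n).take k = prefixOf ω k := by
  simp [prefixOf, ← List.map_take, List.take_range, min_eq_left hkn]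

def greedyPrefix (next : List X → X) : ℕ → List X
  | 0 => []
  | n + 1 => greedyPrefix next n ++ [next (greedyPrefix next n)]

lemma prefixOf_greedyPrefix (next : List X → X) (n : ℕ) :
    prefixOf (fun k => next (greedyPrefix next k)) n = greedyPrefix next n := by
  induction n with
  | zero => rfl
  | succ n ih => rw [prefixOf_succ, ih, greedyPrefix]

lemma exists_path_le_add (V : List X → ℝ) (c : ℕ → ℝ)
    (h : ∀ s, ∃ x, V (s ++ [x]) ≤ V s + c s.length) :
    ∃ ω : ℕ → X, ∀ n, V (prefixOf ω n) ≤ V [] + ∑ k ∈ range n, c k := by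
  choose next hnext using h
  refine ⟨fun k => next (greedyPrefix next k), fun n => ?_⟩
  induction n with
  | zero => simp [prefixOf_zero]
  | succ n ih =>
    have := hnext (prefixOf (fun k => next (greedyPrefix next k)) n)
    rw [length_prefixOf] at this
    rw [prefixOf_succ, sum_range_succ]
    simp only [prefixOf_greedyPrefix] at this ih ⊢
    linarith

end Paths

lemma ComputablyRandom.mono {X : Type} [Fintype X] [Nonempty X] [Primcodable X]
    {Φ Ψ : List X → (X → ℝ) → ℝ} (hle : ∀ s g, Ψ s g ≤ Φ s g) {ω : ℕ → X}
    (h : ComputablyRandom Φ ω) : ComputablyRandom Ψ ω :=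
  fun M hc hM0 hM => h M hc hM0 fun s => (upperE_le_upperE (hle s) _).trans (hM s)

lemma IsSupermartingale.le_of_vacuous {X : Type} [Fintype X] [Nonempty X] {M : List X → ℝ}
    (hM : IsSupermartingale (fun _ => vacuous) M) (s : List X) (x : X) :
    M (s ++ [x]) ≤ M s := by
  have h : 0 ≤ vacuous fun y => -procDiff M s y := neg_nonpos.mp (hM s)
  simpa only [procDiff, neg_sub, sub_nonneg] using h.trans (inf'_le _ (mem_univ x))

lemma computablyRandom_vacuous {X : Type} [Fintype X] [Nonempty X] [Primcodable X]
    (ω : ℕ → X) : ComputablyRandom (fun _ => vacuous) ω := by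
  intro M _ _ hM
  have : Antitone fun n => M (prefixOf ω n) :=
    antitone_nat_of_succ_le fun n => by
      simpa only [prefixOf_succ] using hM.le_of_vacuous _ (ω n)
  exact ⟨M (prefixOf ω 0), Set.forall_mem_range.2 fun n => this (Nat.zero_le n)⟩

section Mixture

variable {X : Type}

noncomputable def mixWeight (M : ℕ → List X → ℝ) (s : List X) (k : ℕ) : ℝ :=
  (1 / 2) ^ k / (1 + M k (s.take k))

noncomputable def mixture (M : ℕ → List X → ℝ) (s : List X) : ℝ :=
  ∑ k ∈ range (s.length + 1), mixWeight M s k * M k s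

variable {M : ℕ → List X → ℝ}

lemma mixWeight_pos (hM0 : ∀ k s, 0 ≤ M k s) (s : List X) (k : ℕ) : 0 < mixWeight M s k :=
  div_pos (by positivity) (by linarith [hM0 k (s.take k)])

lemma mixWeight_mul_le (hM0 : ∀ k s, 0 ≤ M k s) {s : List X} {k : ℕ} (hk : s.length ≤ k) :
    mixWeight M s k * M k s ≤ (1 / 2) ^ k := by
  have hM := hM0 k s
  rw [mixWeight, List.take_of_length_le hk, div_mul_eq_mul_div, div_le_iff₀ (by linarith)]
  nlinarith [pow_pos (one_half_pos (α := ℝ)) k]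

lemma mixWeight_append {s : List X} {k : ℕ} (hk : k ≤ s.length) (t : List X) :
    mixWeight M (s ++ t) k = mixWeight M s k := by
  rw [mixWeight, mixWeight, List.take_append_of_le_length hk]

lemma mixture_append_singleton (s : List X) (x : X) :
    mixture M (s ++ [x]) = mixture M s
      + ∑ k ∈ range (s.length + 1), mixWeight M s k * procDiff (M k) s x
      + mixWeight M (s ++ [x]) (s.length + 1) * M (s.length + 1) (s ++ [x]) := by
  rw [mixture, List.length_append, List.length_singleton, sum_range_succ, mixture,
    ← sum_add_distrib]
  congr 1
  refine sum_congr rfl fun k hk => ?_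
  rw [mixWeight_append (Nat.lt_succ_iff.mp (mem_range.mp hk)), procDiff]
  ring

variable [Fintype X] [Nonempty X] {Φ : List X → (X → ℝ) → ℝ}

lemma exists_mixture_append_le (hΦ : ∀ s, IsCoherent (Φ s)) (hM0 : ∀ k s, 0 ≤ M k s)
    (hM : ∀ k, IsSupermartingale Φ (M k)) (s : List X) :
    ∃ x, mixture M (s ++ [x]) ≤ mixture M s + (1 / 2) ^ (s.length + 1) := by
  set g : X → ℝ := fun x => ∑ k ∈ range (s.length + 1), mixWeight M s k * procDiff (M k) s x
  have hg : upperE (Φ s) g ≤ 0 :=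
    ((hΦ s).upperE_sum_le _ _ _ fun k _ => (mixWeight_pos hM0 s k).le).trans <|
      sum_nonpos fun k _ => mul_nonpos_of_nonneg_of_nonpos (mixWeight_pos hM0 s k).le (hM k s)
  obtain ⟨x, hx⟩ := (hΦ s).exists_le_upperE g
  refine ⟨x, ?_⟩
  have hnew := mixWeight_mul_le hM0 (s := s ++ [x]) (k := s.length + 1) (by simp)
  rw [mixture_append_singleton]
  linarith

lemma exists_path_mixture_le_two (hΦ : ∀ s, IsCoherent (Φ s)) (hM0 : ∀ k s, 0 ≤ M k s)
    (hM : ∀ k, IsSupermartingale Φ (M k)) :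
    ∃ ω : ℕ → X, ∀ n, mixture M (prefixOf ω n) ≤ 2 := by
  obtain ⟨ω, hω⟩ := exists_path_le_add (mixture M) (fun n => (1 / 2) ^ (n + 1))
    (exists_mixture_append_le hΦ hM0 hM)
  refine ⟨ω, fun n => (hω n).trans ?_⟩
  have h0 : mixture M [] ≤ (1 / 2) ^ 0 := by
    simpa [mixture] using mixWeight_mul_le hM0 (s := []) (k := 0) le_rfl
  calc mixture M [] + ∑ k ∈ range n, (1 / 2 : ℝ) ^ (k + 1)
      ≤ ∑ k ∈ range (n + 1), (1 / 2 : ℝ) ^ k := by rw [sum_range_succ']; linarith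
    _ ≤ 2 := sum_geometric_two_le _

theorem exists_path_forall_bddAbove (hΦ : ∀ s, IsCoherent (Φ s)) (hM0 : ∀ k s, 0 ≤ M k s)
    (hM : ∀ k, IsSupermartingale Φ (M k)) :
    ∃ ω : ℕ → X, ∀ k, BddAbove (Set.range fun n => M k (prefixOf ω n)) := by
  obtain ⟨ω, hω⟩ := exists_path_mixture_le_two hΦ hM0 hM
  refine ⟨ω, fun k => IsBoundedUnder.bddAbove_range <|
    isBoundedUnder_of_eventually_le (a := 2 / mixWeight M (prefixOf ω k) k) ?_⟩
  filter_upwards [eventually_ge_atTop k] with n hkn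
  have hw : mixWeight M (prefixOf ω n) k = mixWeight M (prefixOf ω k) k := by
    rw [mixWeight, mixWeight, take_prefixOf ω hkn, take_prefixOf ω le_rfl]
  rw [le_div_iff₀' (mixWeight_pos hM0 _ _), ← hw]
  calc _ ≤ mixture M (prefixOf ω n) :=
        single_le_sum (f := fun j => mixWeight M (prefixOf ω n) j * M j (prefixOf ω n))
          (fun j _ => mul_nonneg (mixWeight_pos hM0 _ _).le (hM0 _ _))
          (by rw [mem_range, length_prefixOf]; omega)
    _ ≤ 2 := hω n

end Mixture

lemma countable_setOf_computable {α σ : Type} [Primcodable α] [Primcodable σ] :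
    {f : α → σ | Computable f}.Countable := by
  let F : {f : α → σ // Computable f} → {g : ℕ → ℕ // Computable g} := fun f =>
    ⟨fun n => Encodable.encode ((Encodable.decode n : Option α).map f.1),
      Computable.encode.comp (Computable.option_map Computable.decode (f.2.comp Computable.snd))⟩
  have hF : F.Injective := fun f g h => Subtype.ext <| funext fun a => by
    simpa [F] using congrFun (congrArg Subtype.val h) (Encodable.encode a)
  exact Set.countable_coe_iff.mp hF.countable

lemma tendsto_of_abs_sub_le_two_zpow {u : ℕ → ℝ} {x : ℝ}
    (h : ∀ n : ℕ, |u n - x| ≤ (2 : ℝ) ^ (-(n : ℤ))) : Tendsto u atTop (nhds x) := by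
  have h2 : Tendsto (fun n : ℕ => (2 : ℝ) ^ (-(n : ℤ))) atTop (nhds 0) := by
    simpa [zpow_neg, zpow_natCast, Function.comp_def] using
      tendsto_inv_atTop_zero.comp (tendsto_pow_atTop_atTop_of_one_lt one_lt_two)
  rw [tendsto_iff_norm_sub_tendsto_zero]
  exact squeeze_zero (fun _ => norm_nonneg _) (fun n => (Real.norm_eq_abs _).trans_le (h n)) h2

lemma countable_setOf_computableProcess {X : Type} [Primcodable X] :
    {M : List X → ℝ | ComputableProcess M}.Countable := by
  refine ((countable_setOf_computable (α := List X × ℕ) (σ := ℚ)).image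
    fun r s => limUnder atTop fun n => (r (s, n) : ℝ)).mono ?_
  rintro M ⟨r, hr, hrM⟩
  exact ⟨r, hr, funext fun s =>
    (tendsto_of_abs_sub_le_two_zpow fun n => hrM s n n le_rfl).limUnder_eq⟩

theorem exists_computablyRandom {X : Type} [Fintype X] [Nonempty X] [Primcodable X]
    {Φ : List X → (X → ℝ) → ℝ} (hΦ : ∀ s, IsCoherent (Φ s)) : ∃ ω, ComputablyRandom Φ ω := by
  set S := {M : List X → ℝ | ComputableProcess M ∧ (∀ s, 0 ≤ M s) ∧ IsSupermartingale Φ M}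
  rcases S.eq_empty_or_nonempty with hS | hS
  · refine ⟨fun _ => Classical.arbitrary X, fun M hc hM0 hM => ?_⟩
    exact absurd (show M ∈ S from ⟨hc, hM0, hM⟩) (hS ▸ Set.notMem_empty M)
  obtain ⟨M, hSM⟩ := (countable_setOf_computableProcess.mono fun _ hM => hM.1).exists_eq_range hS
  have hMS : ∀ k, M k ∈ S := fun k => hSM ▸ Set.mem_range_self k
  obtain ⟨ω, hω⟩ := exists_path_forall_bddAbove hΦ (fun k => (hMS k).2.1) fun k => (hMS k).2.2
  refine ⟨ω, fun N hc hN0 hN => ?_⟩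
  obtain ⟨k, rfl⟩ : N ∈ Set.range M := hSM ▸ ⟨hc, hN0, hN⟩
  exact hω k

/-- (i) every nonempty closed interval `[a,b] ⊆ [min f, max f]`
belongs to `I_f(ω)` for at least one path `ω`; (ii) `I_f(ω)` is nonempty for
every path `ω`, since `[min f, max f] ∈ I_f(ω)`; (iii) `I_f(ω)` is increasing:
supersets (within `I_f`) of its members are members. -/
theorem stmt_9 {X : Type} [Fintype X] [Nonempty X] [Primcodable X]
    (f : X → ℝ) :
    (∀ a b : ℝ, a ≤ b → Finset.univ.inf' Finset.univ_nonempty f ≤ a →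
      b ≤ Finset.univ.sup' Finset.univ_nonempty f →
      ∃ ω : ℕ → X, RandomInterval f a b ω) ∧
    (∀ ω : ℕ → X, RandomInterval f (Finset.univ.inf' Finset.univ_nonempty f)
      (Finset.univ.sup' Finset.univ_nonempty f) ω) ∧
    (∀ (ω : ℕ → X) (a b a' b' : ℝ), RandomInterval f a b ω →
      a' ≤ a → b ≤ b' → a' ≤ b' →
      Finset.univ.inf' Finset.univ_nonempty f ≤ a' →
      b' ≤ Finset.univ.sup' Finset.univ_nonempty f →
      RandomInterval f a' b' ω) := by
  refine ⟨fun a b hab ha hb => ?_, fun ω => ?_, ?_⟩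
  · obtain ⟨E, hE, hEf, hEf'⟩ := exists_isCoherent_lower_upper_eq hab ha hb
    obtain ⟨ω, hω⟩ := exists_computablyRandom fun _ => hE
    exact ⟨ω, E, hE, hω, hEf, hEf'⟩
  · exact ⟨vacuous, isCoherent_vacuous, computablyRandom_vacuous ω, rfl, upperE_vacuous f⟩
  · rintro ω a b a' b' ⟨E, hE, hω, rfl, rfl⟩ ha hb hab' ha' hb'
    obtain ⟨G, hG, hGf, hGf'⟩ := exists_isCoherent_lower_upper_eq hab' ha' hb'
    refine ⟨fun g => min (E g) (G g), hE.min hG, hω.mono fun _ g => min_le_left _ _, ?_, ?_⟩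
    · simp only [hGf, min_eq_right ha]
    · rw [upperE_min, hGf', max_eq_right hb]
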